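/- Let G be a finite abelian group, Ĥ a subgroup of Ĝ generated by a symmetric set S ⊆ Ĝ, and Γ a chordal cover of Cay(Ĥ, S). Then the strong product Γ ⊠ Cay(Ĝ/Ĥ, {Ĥ}) (where Cay(Ĝ/Ĥ,{Ĥ}) is the edgeless graph on the cosets), with vertices relabeled by Ĝ via any choice of coset representatives, is a chordal cover of Cay(Ĝ, S). -/

import Mathlib

open scoped BigOperators

/-- The Cayley graph of a group with connection set `S`. -/
def cayleyGraph {A : Type*} [Group A] (S : Set A) : SimpleGraph A :=
  SimpleGraph.fromRel (fun x y => ∃ s ∈ S, x = s * y)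

/-- The strong product of two simple graphs. -/
def strongProd {V₁ V₂ : Type*} (Γ₁ : SimpleGraph V₁) (Γ₂ : SimpleGraph V₂) :
    SimpleGraph (V₁ × V₂) where
  Adj a b := (a.1 = b.1 ∧ Γ₂.Adj a.2 b.2) ∨ (Γ₁.Adj a.1 b.1 ∧ a.2 = b.2) ∨
    (Γ₁.Adj a.1 b.1 ∧ Γ₂.Adj a.2 b.2)
  symm := by
    constructor
    rintro a b (⟨h1, h2⟩ | ⟨h1, h2⟩ | ⟨h1, h2⟩)
    · exact Or.inl ⟨h1.symm, h2.symm⟩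
    · exact Or.inr (Or.inl ⟨h1.symm, h2.symm⟩)
    · exact Or.inr (Or.inr ⟨h1.symm, h2.symm⟩)
  loopless := by
    constructor
    rintro a (⟨h1, h2⟩ | ⟨h1, h2⟩ | ⟨h1, h2⟩)
    · exact Γ₂.irrefl h2
    · exact Γ₁.irrefl h1
    · exact Γ₁.irrefl h1

/-- A graph is chordal if every cycle of length at least four has a chord. -/
def IsChordal {V : Type*} (Γ : SimpleGraph V) : Prop :=
  ∀ ⦃v : V⦄ (w : Γ.Walk v v), w.IsCycle → 4 ≤ w.length →
    ∃ i j : ℕ, i + 2 ≤ j ∧ j < w.length ∧ ¬(i = 0 ∧ j + 1 = w.length) ∧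
      Γ.Adj (w.getVert i) (w.getVert j)

lemma Walk.getVert_map' {V W : Type*} {G : SimpleGraph V} {G' : SimpleGraph W}
    (f : G →g G') {u v : V} (p : G.Walk u v) (i : ℕ) :
    (p.map f).getVert i = f (p.getVert i) := by
  induction p generalizing i with
  | nil => simp [SimpleGraph.Walk.getVert]
  | cons h q ih =>
    cases i with
    | zero => simp
    | succ n => simpa using ih n

lemma Walk.isCycle_map_of_injOn {V W : Type*} {G : SimpleGraph V} {G' : SimpleGraph W}
    (f : G →g G') {u : V} {p : G.Walk u u} (hp : p.IsCycle)
    (hinj : Set.InjOn f {x | x ∈ p.support}) : (p.map f).IsCycle := by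
  rw [SimpleGraph.Walk.isCycle_def] at hp ⊢
  obtain ⟨ht, hn, hnd⟩ := hp
  refine ⟨?_, ?_, ?_⟩
  · rw [SimpleGraph.Walk.isTrail_def, SimpleGraph.Walk.edges_map]
    refine ht.edges_nodup.map_on ?_
    intro e1 he1 e2 he2 heq
    induction e1 using Sym2.ind with
    | _ a b =>
      induction e2 using Sym2.ind with
      | _ c d =>
        have ha := p.fst_mem_support_of_mem_edges he1
        have hb := p.snd_mem_support_of_mem_edges he1
        have hc := p.fst_mem_support_of_mem_edges he2
        have hd := p.snd_mem_support_of_mem_edges he2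
        simp only [Sym2.map_pair_eq, Sym2.eq_iff] at heq ⊢
        rcases heq with ⟨h1, h2⟩ | ⟨h1, h2⟩
        · exact Or.inl ⟨hinj ha hc h1, hinj hb hd h2⟩
        · exact Or.inr ⟨hinj ha hd h1, hinj hb hc h2⟩
  · rw [Ne, SimpleGraph.Walk.map_eq_nil_iff]
    exact hn
  · rw [SimpleGraph.Walk.support_map, ← List.map_tail]
    refine hnd.map_on ?_
    intro x hx y hy
    exact hinj (List.mem_of_mem_tail hx) (List.mem_of_mem_tail hy)

/-- If `Γ` is a chordal cover of `Cay(Ĥ, S)` where `Ĥ = ⟨S⟩ ≤ Ĝ`, then the strong product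
of `Γ` with the edgeless graph on the cosets `Ĝ/Ĥ`, relabeled by `Ĝ` via any choice of
coset representatives, is a chordal cover of `Cay(Ĝ, S)`. -/
theorem quotient_relabel_chordal_cover
    (G : Type*) [CommGroup G] [Fintype G]
    (S : Set (G →* ℂˣ)) (hSsymm : ∀ s ∈ S, s⁻¹ ∈ S)
    (H : Subgroup (G →* ℂˣ)) (hH : H = Subgroup.closure S)
    (Γ : SimpleGraph H) (hΓchordal : IsChordal Γ)
    (hΓcover : cayleyGraph {h : H | (h : G →* ℂˣ) ∈ S} ≤ Γ)
    (φ : (G →* ℂˣ) ⧸ H → (G →* ℂˣ)) (hφ : ∀ c, QuotientGroup.mk (φ c) = c)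
    (e : (H × ((G →* ℂˣ) ⧸ H)) ≃ (G →* ℂˣ))
    (he : ∀ p : H × ((G →* ℂˣ) ⧸ H), e p = (p.1 : G →* ℂˣ) * φ p.2) :
    IsChordal (SimpleGraph.map e.toEmbedding
        (strongProd Γ (⊥ : SimpleGraph ((G →* ℂˣ) ⧸ H)))) ∧
    cayleyGraph S ≤ SimpleGraph.map e.toEmbedding
        (strongProd Γ (⊥ : SimpleGraph ((G →* ℂˣ) ⧸ H))) := by
  set Γ'' := SimpleGraph.map e.toEmbedding
      (strongProd Γ (⊥ : SimpleGraph ((G →* ℂˣ) ⧸ H))) with hΓ''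
  have hadj'' : ∀ {x y : G →* ℂˣ}, Γ''.Adj x y →
      Γ.Adj (e.symm x).1 (e.symm y).1 ∧ (e.symm x).2 = (e.symm y).2 := by
    intro x y h
    rw [hΓ'', SimpleGraph.map_adj] at h
    obtain ⟨a, b, hab, ha, hb⟩ := h
    have ha' : e.symm x = a := by rw [← ha]; simp
    have hb' : e.symm y = b := by rw [← hb]; simp
    rw [ha', hb']
    rcases hab with ⟨h1, h2⟩ | ⟨h1, h2⟩ | ⟨h1, h2⟩
    · exact absurd h2 (by simp)
    · exact ⟨h1, h2⟩
    · exact absurd h2 (by simp)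
  let f : Γ'' →g Γ := ⟨fun x => (e.symm x).1, fun h => (hadj'' h).1⟩
  constructor
  · -- chordality
    intro v w hw hlen
    have hconst : ∀ i, (e.symm (w.getVert i)).2 = (e.symm v).2 := by
      intro i
      induction i with
      | zero => simp
      | succ n ih =>
        by_cases hn : n < w.length
        · have hadj := w.adj_getVert_succ hn
          have := (hadj'' hadj).2
          rw [← this]
          exact ih
        · rw [w.getVert_of_length_le (by omega)]
    have hsupp : ∀ x ∈ w.support, (e.symm x).2 = (e.symm v).2 := by
      intro x hx
      obtain ⟨n, hn, -⟩ := SimpleGraph.Walk.mem_support_iff_exists_getVert.mp hx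
      rw [← hn]; exact hconst n
    have hinj : Set.InjOn f {x | x ∈ w.support} := by
      intro x hx y hy hxy
      have : e.symm x = e.symm y :=
        Prod.ext hxy ((hsupp x hx).trans (hsupp y hy).symm)
      exact e.symm.injective this
    have hcyc := Walk.isCycle_map_of_injOn f hw hinj
    obtain ⟨i, j, h1, h2, h3, h4⟩ := hΓchordal (w.map f) hcyc
      (by rwa [SimpleGraph.Walk.length_map])
    rw [SimpleGraph.Walk.length_map] at h2 h3
    refine ⟨i, j, h1, h2, h3, ?_⟩
    rw [Walk.getVert_map', Walk.getVert_map'] at h4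
    refine (SimpleGraph.map_adj e.toEmbedding _ _ _).mpr ⟨e.symm (w.getVert i), e.symm (w.getVert j),
      Or.inr (Or.inl ⟨h4, (hconst i).trans (hconst j).symm⟩), by simp, by simp⟩
  · -- cover
    intro x y hxy
    rw [cayleyGraph, SimpleGraph.fromRel_adj] at hxy
    obtain ⟨hne, hrel⟩ := hxy
    obtain ⟨s, hs, hxs⟩ : ∃ s ∈ S, x = s * y := by
      rcases hrel with ⟨s, hs, hxs⟩ | ⟨s, hs, hxs⟩
      · exact ⟨s, hs, hxs⟩
      · exact ⟨s⁻¹, hSsymm s hs, by rw [hxs]; exact (inv_mul_cancel_left s x).symm⟩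
    have hsH : s ∈ H := hH ▸ Subgroup.subset_closure hs
    set c : (G →* ℂˣ) ⧸ H := QuotientGroup.mk y with hc
    have hy2 : y * (φ c)⁻¹ ∈ H := by
      have h1 : (QuotientGroup.mk (φ c) : (G →* ℂˣ) ⧸ H) = QuotientGroup.mk y := hφ c
      have h2 : (φ c)⁻¹ * y ∈ H := QuotientGroup.eq.mp h1
      have heq : y * (φ c)⁻¹ = (φ c)⁻¹ * y := mul_comm y ((φ c)⁻¹)
      rw [heq]
      exact h2
    have hx2 : x * (φ c)⁻¹ ∈ H := by
      have h3 : x * (φ c)⁻¹ = s * (y * (φ c)⁻¹) := by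
        rw [hxs]; exact mul_assoc s y ((φ c)⁻¹)
      rw [h3]
      exact H.mul_mem hsH hy2
    refine (SimpleGraph.map_adj e.toEmbedding _ x y).mpr
      ⟨(⟨x * (φ c)⁻¹, hx2⟩, c), (⟨y * (φ c)⁻¹, hy2⟩, c),
        Or.inr (Or.inl ⟨?_, rfl⟩), ?_, ?_⟩
    · refine hΓcover ?_
      rw [cayleyGraph, SimpleGraph.fromRel_adj]
      constructor
      · intro h
        apply hne
        have h4 : x * (φ c)⁻¹ = y * (φ c)⁻¹ := congrArg Subtype.val h
        calc x = x * (φ c)⁻¹ * φ c := (inv_mul_cancel_right x (φ c)).symm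
          _ = y * (φ c)⁻¹ * φ c := by rw [h4]
          _ = y := inv_mul_cancel_right y (φ c)
      · refine Or.inl ⟨⟨s, hsH⟩, hs, ?_⟩
        apply Subtype.ext
        show x * (φ c)⁻¹ = s * (y * (φ c)⁻¹)
        rw [hxs]; exact mul_assoc s y ((φ c)⁻¹)
    · show e (_, c) = x
      rw [he]
      exact inv_mul_cancel_right x (φ c)
    · show e (_, c) = y
      rw [he]
      exact inv_mul_cancel_right y (φ c)
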